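/- Let ε₀ > 1 be a real number. Then p(k) → 1 as k → ∞. (In the paper's terms: as the window length k goes to infinity, the naive dynamic window-level Granger causality test detects the causality with probability tending to one, i.e. it degenerates to the traditional channel-level Granger causality test.) -/

import Mathlib

/-!
For shape `a` and rates `r₁ < m < r₂`, a `Γ(a, r₁)` variable `X` (mean `a / r₁`) and an
independent `Γ(a, r₂)` variable `Y` (mean `a / r₂`) are separated by the threshold `a / m`
except on the events `X ≤ a / m` and `Y > a / m`. By the Chernoff bound each has probability
at most `ρ ^ a` with `ρ = θ * exp (1 - θ) < 1`, `θ = r / m`, so `P(X > Y) → 1`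
as `a → ∞`. The theorem is the case `a = k / 2`, `r₁ = 1 / (2 ε₀) < r₂ = 1 / 2`.
-/

open MeasureTheory ProbabilityTheory Filter

/-- `p ε₀ k` is the probability of the event `{(x, y) : x > y}` under the product of the
Gamma distribution with shape `k/2` and rate `1/(2ε₀)` and the Gamma distribution with
shape `k/2` and rate `1/2` (the chi-square distribution with `k` degrees of freedom):
the probability that the window-level F-statistic of the naive DWGC method exceeds the
threshold `1` for a window of length `k` when the expected F-ratio is `ε₀`. -/
noncomputable def naiveDWGCDetectProb (ε₀ : ℝ) (k : ℕ) : ℝ :=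
  (((gammaMeasure ((k : ℝ) / 2) (1 / (2 * ε₀))).prod
      (gammaMeasure ((k : ℝ) / 2) (1 / 2)))
    {q : ℝ × ℝ | q.1 > q.2}).toReal

open Real Set Topology
open scoped ENNReal

lemma mul_exp_one_sub_lt_one {θ : ℝ} (hθ : θ ≠ 1) : θ * exp (1 - θ) < 1 := by
  have h : θ < exp (θ - 1) := by simpa using add_one_lt_exp (sub_ne_zero.mpr hθ)
  calc θ * exp (1 - θ) < exp (θ - 1) * exp (1 - θ) := by gcongr
    _ = 1 := by rw [← exp_add]; simp

lemma one_le_measureReal_prod_lt_add {α : Type*} [LinearOrder α] [MeasurableSpace α]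
    {μ ν : Measure α} [IsProbabilityMeasure μ] [IsProbabilityMeasure ν] (t : α) :
    1 ≤ (μ.prod ν).real {q | q.2 < q.1} + μ.real (Iic t) + ν.real (Ioi t) := by
  have hcover : univ ⊆ {q : α × α | q.2 < q.1} ∪ (Iic t ×ˢ univ ∪ univ ×ˢ Ioi t) := by
    rintro ⟨x, y⟩ -
    simp only [mem_union, mem_ofPred_eq, mem_prod, mem_Iic, mem_Ioi, mem_univ, and_true,
      true_and]
    by_contra! h
    order
  calc 1 = (μ.prod ν).real univ := probReal_univ.symm
    _ ≤ (μ.prod ν).real ({q | q.2 < q.1} ∪ (Iic t ×ˢ univ ∪ univ ×ˢ Ioi t)) :=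
        measureReal_mono hcover (measure_ne_top _ _)
    _ ≤ (μ.prod ν).real {q | q.2 < q.1}
          + ((μ.prod ν).real (Iic t ×ˢ univ) + (μ.prod ν).real (univ ×ˢ Ioi t)) :=
        (measureReal_union_le _ _).trans (by gcongr; exact measureReal_union_le _ _)
    _ = _ := by simp [add_assoc]

namespace ProbabilityTheory

variable {a r : ℝ}

lemma measurable_gammaPDF (a r : ℝ) : Measurable (gammaPDF a r) :=
  (measurable_gammaPDFReal a r).ennreal_ofReal

lemma gammaPDFReal_mul_exp_mul {s : ℝ} (hr : 0 ≤ r) (hs : s < r) (x : ℝ) :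
    gammaPDFReal a r x * exp (s * x) = (r / (r - s)) ^ a * gammaPDFReal a (r - s) x := by
  have hrs : 0 < r - s := sub_pos.mpr hs
  unfold gammaPDFReal
  split_ifs
  · have hexp : exp (-(r * x)) * exp (s * x) = exp (-((r - s) * x)) := by
      rw [← exp_add]; ring_nf
    rw [div_rpow hr hrs.le, mul_assoc _ (exp _), hexp]
    field_simp
  · simp

lemma lintegral_exp_mul_gammaMeasure {s : ℝ} (ha : 0 < a) (hr : 0 < r) (hs : s < r) :
    ∫⁻ x, ENNReal.ofReal (exp (s * x)) ∂gammaMeasure a r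
      = ENNReal.ofReal ((r / (r - s)) ^ a) := by
  have hrs : 0 < r - s := sub_pos.mpr hs
  rw [gammaMeasure,
    lintegral_withDensity_eq_lintegral_mul _ (measurable_gammaPDF a r) (by fun_prop)]
  calc ∫⁻ x, gammaPDF a r x * ENNReal.ofReal (exp (s * x))
      = ∫⁻ x, ENNReal.ofReal ((r / (r - s)) ^ a) * gammaPDF a (r - s) x := by
        refine lintegral_congr fun x => ?_
        rw [gammaPDF, gammaPDF, ← ENNReal.ofReal_mul (gammaPDFReal_nonneg ha hr x),
          ← ENNReal.ofReal_mul (by positivity), gammaPDFReal_mul_exp_mul hr.le hs]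
    _ = ENNReal.ofReal ((r / (r - s)) ^ a) := by
        rw [lintegral_const_mul _ (measurable_gammaPDF a _),
          lintegral_gammaPDF_eq_one ha hrs, mul_one]

/-- Chernoff bound with the exponential tilt `s = r - m`, optimal for the threshold `a / m`. -/
lemma gammaMeasure_setOf_mul_le_mul_le {m : ℝ} (ha : 0 < a) (hr : 0 < r) (hm : 0 < m) :
    gammaMeasure a r {x | (r - m) * (a / m) ≤ (r - m) * x}
      ≤ ENNReal.ofReal ((r / m * exp (1 - r / m)) ^ a) := by
  have hset : {x | (r - m) * (a / m) ≤ (r - m) * x}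
      = {x | ENNReal.ofReal (exp ((r - m) * (a / m))) ≤ ENNReal.ofReal (exp ((r - m) * x))} := by
    simp only [ENNReal.ofReal_le_ofReal_iff (exp_pos _).le, exp_le_exp]
  have hbound : (r / m) ^ a / exp ((r - m) * (a / m)) = (r / m * exp (1 - r / m)) ^ a := by
    rw [mul_rpow (by positivity) (exp_pos _).le, ← exp_mul, div_eq_mul_inv, ← exp_neg]
    congr 2
    field_simp
    ring
  calc gammaMeasure a r {x | (r - m) * (a / m) ≤ (r - m) * x}
      ≤ (∫⁻ x, ENNReal.ofReal (exp ((r - m) * x)) ∂gammaMeasure a r)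
          / ENNReal.ofReal (exp ((r - m) * (a / m))) := by
        rw [hset]
        exact meas_ge_le_lintegral_div (by fun_prop) (by simp [exp_pos]) ENNReal.ofReal_ne_top
    _ = ENNReal.ofReal ((r / m * exp (1 - r / m)) ^ a) := by
        rw [lintegral_exp_mul_gammaMeasure ha hr (by linarith), sub_sub_cancel,
          ← ENNReal.ofReal_div_of_pos (exp_pos _), hbound]

lemma tendsto_gammaMeasure_real_nhds_zero {ι : Type*} {l : Filter ι} {a : ι → ℝ}
    {s : ι → Set ℝ} {m : ℝ} (hr : 0 < r) (hm : 0 < m) (hrm : r ≠ m)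
    (ha : Tendsto a l atTop) (hs : ∀ i, s i ⊆ {x | (r - m) * (a i / m) ≤ (r - m) * x}) :
    Tendsto (fun i => (gammaMeasure (a i) r).real (s i)) l (𝓝 0) := by
  set ρ := r / m * exp (1 - r / m)
  have hρ₀ : 0 < ρ := by positivity
  have hρ₁ : ρ < 1 := mul_exp_one_sub_lt_one (by rwa [ne_eq, div_eq_one_iff_eq hm.ne'])
  refine squeeze_zero' (Eventually.of_forall fun i => measureReal_nonneg)
    ?_ ((tendsto_rpow_atTop_of_base_lt_one ρ (by linarith) hρ₁).comp ha)
  filter_upwards [ha.eventually_gt_atTop 0] with i hi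
  exact ENNReal.toReal_le_of_le_ofReal (rpow_nonneg hρ₀.le _)
    ((measure_mono (hs i)).trans (gammaMeasure_setOf_mul_le_mul_le hi hr hm))

theorem tendsto_measureReal_prod_gammaMeasure_gt {ι : Type*} {l : Filter ι} {a : ι → ℝ}
    {r₁ r₂ : ℝ} (hr₁ : 0 < r₁) (hr : r₁ < r₂) (ha : Tendsto a l atTop) :
    Tendsto (fun i => ((gammaMeasure (a i) r₁).prod (gammaMeasure (a i) r₂)).real
      {q | q.2 < q.1}) l (𝓝 1) := by
  obtain ⟨m, hr₁m, hmr₂⟩ := exists_between hr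
  have hX : Tendsto (fun i => (gammaMeasure (a i) r₁).real (Iic (a i / m))) l (𝓝 0) :=
    tendsto_gammaMeasure_real_nhds_zero (m := m) hr₁ (hr₁.trans hr₁m) hr₁m.ne ha
      fun i x hx => mul_le_mul_of_nonpos_left hx (sub_nonpos.mpr hr₁m.le)
  have hY : Tendsto (fun i => (gammaMeasure (a i) r₂).real (Ioi (a i / m))) l (𝓝 0) :=
    tendsto_gammaMeasure_real_nhds_zero (m := m) (hr₁.trans hr) (hr₁.trans hr₁m) hmr₂.ne' ha
      fun i x hx => mul_le_mul_of_nonneg_left (le_of_lt hx) (sub_nonneg.mpr hmr₂.le)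
  refine tendsto_of_tendsto_of_tendsto_of_le_of_le'
    (by simpa using (tendsto_const_nhds.sub hX).sub hY) tendsto_const_nhds ?_ ?_
  all_goals
    filter_upwards [ha.eventually_gt_atTop 0] with i hi
    have := isProbabilityMeasure_gammaMeasure hi hr₁
    have := isProbabilityMeasure_gammaMeasure hi (hr₁.trans hr)
  · linarith [one_le_measureReal_prod_lt_add (μ := gammaMeasure (a i) r₁)
      (ν := gammaMeasure (a i) r₂) (a i / m)]
  · exact measureReal_le_one

end ProbabilityTheory

/-- As the window length `k` goes to infinity, the naive dynamic window-level Granger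
causality test detects the causality with probability tending to one, i.e. it degenerates
to the traditional channel-level Granger causality test. -/
theorem naiveDWGCDetectProb_tendsto_one (ε₀ : ℝ) (hε₀ : 1 < ε₀) :
    Tendsto (fun k : ℕ => naiveDWGCDetectProb ε₀ k) atTop (nhds 1) :=
  tendsto_measureReal_prod_gammaMeasure_gt (by positivity)
    (one_div_lt_one_div_of_lt two_pos (by linarith))
    (tendsto_natCast_atTop_atTop.atTop_div_const two_pos)
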